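/- arXiv:2510.08432 — 4 statements merged into one kernel-verified Lean document; each statement's English description precedes it below -/
import Mathlib

section
/- Let A : ℕ → ℕ satisfy A(1)=1, A(2)=2, A(3)=2, A(k)=A(k-2)+A(k-3) for k ≥ 4. Then for any k ≥ 4, A(k) - A(k-1) ≥ A(k-1) - A(k-2). -/
theorem stmt_3 (A : ℕ → ℕ) (h1 : A 1 = 1) (h2 : A 2 = 2) (h3 : A 3 = 2)
    (hrec : ∀ k, 4 ≤ k → A k = A (k - 2) + A (k - 3)) :
    ∀ k, 4 ≤ k → (A (k - 1) : ℤ) - A (k - 2) ≤ (A k : ℤ) - A (k - 1) := by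
  -- monotonicity: A (n+1) ≤ A (n+2)
  have mono : ∀ n : ℕ, A (n + 1) ≤ A (n + 2) := by
    intro n
    induction n using Nat.strong_induction_on with
    | _ n ih =>
      match n with
      | 0 => show A 1 ≤ A 2; omega
      | 1 => show A 2 ≤ A 3; omega
      | 2 =>
        show A 3 ≤ A 4
        have := hrec 4 (by norm_num); simp at this; omega
      | (m + 3) =>
        show A (m + 4) ≤ A (m + 5)
        have e1 : A (m + 5) = A (m + 3) + A (m + 2) := hrec (m + 5) (by omega)
        have e2 : A (m + 4) = A (m + 2) + A (m + 1) := hrec (m + 4) (by omega)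
        have i1 : A (m + 1) ≤ A (m + 2) := ih m (by omega)
        have i2 : A (m + 2) ≤ A (m + 3) := ih (m + 1) (by omega)
        omega
  intro k hk
  match k, hk with
  | 4, _ =>
    have := hrec 4 (by norm_num); simp at this
    show (A 3 : ℤ) - A 2 ≤ (A 4 : ℤ) - A 3
    omega
  | 5, _ =>
    have h4 := hrec 4 (by norm_num); simp at h4
    have h5 := hrec 5 (by norm_num); simp at h5
    show (A 4 : ℤ) - A 3 ≤ (A 5 : ℤ) - A 4
    omega
  | 6, _ =>
    have h4 := hrec 4 (by norm_num); simp at h4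
    have h5 := hrec 5 (by norm_num); simp at h5
    have h6 := hrec 6 (by norm_num); simp at h6
    show (A 5 : ℤ) - A 4 ≤ (A 6 : ℤ) - A 5
    omega
  | (n + 7), _ =>
    show (A (n + 6) : ℤ) - A (n + 5) ≤ (A (n + 7) : ℤ) - A (n + 6)
    have e1 : A (n + 7) = A (n + 5) + A (n + 4) := hrec (n + 7) (by omega)
    have e2 : A (n + 6) = A (n + 4) + A (n + 3) := hrec (n + 6) (by omega)
    have e3 : A (n + 5) = A (n + 3) + A (n + 2) := hrec (n + 5) (by omega)
    have e4 : A (n + 4) = A (n + 2) + A (n + 1) := hrec (n + 4) (by omega)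
    have i1 := mono n
    omega
end

section
/- Let α be the unique real root of x^3 - x - 1 = 0, and let A : ℕ → ℕ satisfy A(1)=1, A(2)=2, A(3)=2, A(k)=A(k-2)+A(k-3) for k ≥ 4. Then for all k ≥ 7, A(k) ≥ 0.94·α^k. -/
theorem stmt_4 (α : ℝ) (hα : α ^ 3 - α - 1 = 0)
    (A : ℕ → ℕ) (h1 : A 1 = 1) (h2 : A 2 = 2) (h3 : A 3 = 2)
    (hrec : ∀ k, 4 ≤ k → A k = A (k - 2) + A (k - 3)) :
    ∀ k, 7 ≤ k → 0.94 * α ^ k ≤ (A k : ℝ) := by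
  have hpos : (0:ℝ) ≤ α := by
    nlinarith [sq_nonneg (α + 1), sq_nonneg (α - 1), sq_nonneg α, sq_nonneg (α^2 - 1)]
  have hub : α ≤ 1.3248 := by
    nlinarith [sq_nonneg (α - 1.3248), sq_nonneg (α + 1.3248), sq_nonneg α]
  have h4 : A 4 = 3 := by rw [hrec 4 (by norm_num)]; simp [h1, h2]
  have h5 : A 5 = 4 := by rw [hrec 5 (by norm_num)]; simp [h2, h3]
  have h6 : A 6 = 5 := by rw [hrec 6 (by norm_num)]; simp [h3, h4]
  have h7 : A 7 = 7 := by rw [hrec 7 (by norm_num)]; simp [h4, h5]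
  have h8 : A 8 = 9 := by rw [hrec 8 (by norm_num)]; simp [h5, h6]
  have h9 : A 9 = 12 := by rw [hrec 9 (by norm_num)]; simp [h6, h7]
  have hα3 : α ^ 3 = α + 1 := by linarith
  intro k hk
  induction k using Nat.strong_induction_on with
  | _ k ih =>
    rcases le_or_gt 10 k with h10 | h10
    · have e := hrec k (by omega)
      have ih2 := ih (k - 2) (by omega) (by omega)
      have ih3 := ih (k - 3) (by omega) (by omega)
      obtain ⟨n, rfl⟩ : ∃ n, k = n + 3 := ⟨k - 3, by omega⟩
      have hk2 : n + 3 - 2 = n + 1 := by omega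
      have hk3 : n + 3 - 3 = n := by omega
      simp only [hk2, hk3] at e ih2 ih3
      have key : (0.94:ℝ) * α ^ (n + 3) = 0.94 * α ^ (n + 1) + 0.94 * α ^ n := by
        rw [pow_add, hα3, pow_succ]; ring
      rw [e]; push_cast; linarith
    · have hp : ∀ n : ℕ, α ^ n ≤ 1.3248 ^ n := fun n => pow_le_pow_left₀ hpos hub n
      interval_cases k
      · rw [h7]; have := hp 7; norm_num at this ⊢; nlinarith
      · rw [h8]; have := hp 8; norm_num at this ⊢; nlinarith
      · rw [h9]; have := hp 9; norm_num at this ⊢; nlinarith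
end

section
/- Let A : ℕ → ℕ satisfy A(1)=1, A(2)=2, A(3)=2, A(k)=A(k-2)+A(k-3) for k ≥ 4. Define the depth of the Blast procedure by B(2)=B(3)=1 and B(k) = A(k-3) + B(k-2) for k ≥ 4. Then B(k) = A(k) - 1 for all k ≥ 2. -/
theorem stmt_6 (A : ℕ → ℕ) (h1 : A 1 = 1) (h2 : A 2 = 2) (h3 : A 3 = 2)
    (hrec : ∀ k, 4 ≤ k → A k = A (k - 2) + A (k - 3))
    (B : ℕ → ℕ) (hB2 : B 2 = 1) (hB3 : B 3 = 1)
    (hBrec : ∀ k, 4 ≤ k → B k = A (k - 3) + B (k - 2)) :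
    ∀ k, 2 ≤ k → B k = A k - 1 := by
  have hpos : ∀ n, 1 ≤ n → 1 ≤ A n := by
    intro n
    induction n using Nat.strong_induction_on with
    | _ n ih =>
      intro hn
      match n, hn with
      | 1, _ => omega
      | 2, _ => omega
      | 3, _ => omega
      | (m+4), _ =>
        rw [hrec (m+4) (by omega)]
        have := ih (m+4-2) (by omega) (by omega)
        omega
  intro k
  induction k using Nat.strong_induction_on with
  | _ k ih =>
    intro hk
    match k, hk with
    | 2, _ => omega
    | 3, _ => omega
    | (m+4), _ =>
      rw [hBrec (m+4) (by omega), hrec (m+4) (by omega)]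
      have h1 := ih (m+4-2) (by omega) (by omega)
      have h2 := hpos (m+4-2) (by omega)
      omega
end

section
/- Let A : ℕ → ℕ satisfy A(1)=1, A(2)=2, A(3)=2, A(k)=A(k-2)+A(k-3) for k ≥ 4, and for a positive integer n let A⁻¹(n) be the largest index j such that A(j) ≤ n. Define b_k(t) for k ≥ 2 and t ∈ [1, A(k)-1] by: b_k(t) = 1 if k ∈ {2,3}; and for k ≥ 4, b_k(1) = 1, b_k(t) = 2 for t ∈ [2, A(k-3)], and b_k(t) = 1 + b_{k-2}(t - A(k-3)) for t ∈ [A(k-3)+1, A(k)-1]. Then for all k ≥ 2 and t ∈ [1, A(k)-1], b_k(t) = ⌈(k - A⁻¹(A(k) - t + 1))/2⌉ + 1. -/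
theorem stmt_8 (A : ℕ → ℕ) (h1 : A 1 = 1) (h2 : A 2 = 2) (h3 : A 3 = 2)
    (hrec : ∀ k, 4 ≤ k → A k = A (k - 2) + A (k - 3))
    (Ainv : ℕ → ℕ)
    (hAinv : ∀ n, 1 ≤ n → 1 ≤ Ainv n ∧ A (Ainv n) ≤ n ∧
      ∀ j, 1 ≤ j → A j ≤ n → j ≤ Ainv n)
    (b : ℕ → ℕ → ℕ)
    (hb2 : ∀ t ∈ Finset.Icc 1 (A 2 - 1), b 2 t = 1)
    (hb3 : ∀ t ∈ Finset.Icc 1 (A 3 - 1), b 3 t = 1)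
    (hb1 : ∀ k, 4 ≤ k → b k 1 = 1)
    (hbmid : ∀ k, 4 ≤ k → ∀ t ∈ Finset.Icc 2 (A (k - 3)), b k t = 2)
    (hbrec : ∀ k, 4 ≤ k → ∀ t ∈ Finset.Icc (A (k - 3) + 1) (A k - 1),
      b k t = 1 + b (k - 2) (t - A (k - 3))) :
    ∀ k, 2 ≤ k → ∀ t ∈ Finset.Icc 1 (A k - 1),
      b k t = (k - Ainv (A k - t + 1) + 1) / 2 + 1 := by
  -- recurrence in additive form
  have hrec' : ∀ k, 1 ≤ k → A (k + 3) = A (k + 1) + A k := by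
    intro k hk
    have h := hrec (k + 3) (by omega)
    rw [show k + 3 - 2 = k + 1 by omega, show k + 3 - 3 = k by omega] at h
    exact h
  -- positivity
  have hpos : ∀ k, 1 ≤ k → 1 ≤ A k := by
    intro k hk
    induction k using Nat.strong_induction_on with
    | _ k ih =>
      rcases Nat.lt_or_ge k 4 with h4 | h4
      · interval_cases k <;> omega
      · obtain ⟨m, rfl⟩ : ∃ m, k = m + 4 := ⟨k - 4, by omega⟩
        have e := hrec' (m + 1) (by omega)
        rw [show m + 1 + 3 = m + 4 by omega, show m + 1 + 1 = m + 2 by omega] at e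
        have := ih (m + 1) (by omega) (by omega)
        omega
  -- strict monotone step
  have hstep : ∀ k, 3 ≤ k → A k < A (k + 1) := by
    intro k hk
    rcases Nat.lt_or_ge k 5 with h5 | h5
    · have e4 := hrec' 1 (by omega)
      have e5 := hrec' 2 (by omega)
      norm_num at e4 e5
      interval_cases k <;> norm_num <;> omega
    · obtain ⟨m, rfl⟩ : ∃ m, k = m + 5 := ⟨k - 5, by omega⟩
      have e1 := hrec' (m + 3) (by omega)
      have e2 := hrec' (m + 2) (by omega)
      have e3 := hrec' (m + 1) (by omega)
      have p := hpos (m + 1) (by omega)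
      rw [show m + 3 + 3 = m + 6 by omega, show m + 3 + 1 = m + 4 by omega] at e1
      rw [show m + 2 + 3 = m + 5 by omega, show m + 2 + 1 = m + 3 by omega] at e2
      rw [show m + 1 + 3 = m + 4 by omega, show m + 1 + 1 = m + 2 by omega] at e3
      rw [show m + 5 + 1 = m + 6 by omega]
      omega
  -- monotone
  have hmono : ∀ k j, 3 ≤ k → k ≤ j → A k ≤ A j := by
    intro k j hk hkj
    induction j, hkj using Nat.le_induction with
    | base => exact le_refl _
    | succ n hn ih => exact ih.trans (hstep n (by omega)).le
  -- Ainv upper bound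
  have hinv_le : ∀ n k, 3 ≤ k → 1 ≤ n → n < A k → Ainv n ≤ k - 1 := by
    intro n k hk hn hnk
    obtain ⟨ha, hb', _⟩ := hAinv n hn
    by_contra hcon
    push_neg at hcon
    have : A k ≤ A (Ainv n) := hmono k (Ainv n) hk (by omega)
    omega
  -- Ainv (A k) = k for k ≥ 3
  have hinvA : ∀ k, 3 ≤ k → Ainv (A k) = k := by
    intro k hk
    have hp := hpos k (by omega)
    obtain ⟨ha, hb', hc⟩ := hAinv (A k) hp
    have h1' : k ≤ Ainv (A k) := hc k (by omega) le_rfl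
    have h2' : Ainv (A k) ≤ k + 1 - 1 :=
      hinv_le (A k) (k + 1) (by omega) hp (hstep k hk)
    omega
  -- main induction
  intro k
  induction k using Nat.strong_induction_on with
  | _ k ih =>
    intro hk t ht
    simp only [Finset.mem_Icc] at ht
    rcases Nat.lt_or_ge k 4 with h4 | h4
    · -- k = 2 or k = 3 : A k = 2, t = 1
      have hA23 : A k = 2 := by interval_cases k <;> omega
      have ht1 : t = 1 := by omega
      subst ht1
      have hbv : b k 1 = 1 := by
        interval_cases k
        · exact hb2 1 (by simp [h2])
        · exact hb3 1 (by simp [h3])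
      have hn : A k - 1 + 1 = A 3 := by omega
      rw [hbv, hn, hinvA 3 (by omega)]
      interval_cases k <;> omega
    · -- k ≥ 4
      have e := hrec k h4
      have p2 := hpos (k - 2) (by omega)
      have p3 := hpos (k - 3) (by omega)
      rcases eq_or_lt_of_le ht.1 with ht1 | ht2
      · -- t = 1
        subst ht1
        have pk := hpos k (by omega)
        rw [hb1 k h4, show A k - 1 + 1 = A k by omega, hinvA k (by omega)]
        omega
      · -- 2 ≤ t
        rcases le_or_gt t (A (k - 3)) with hmid | hrecc
        · -- middle range
          have hbv := hbmid k h4 t (by simp only [Finset.mem_Icc]; omega)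
          set n := A k - t + 1 with hn
          have hn1 : 1 ≤ n := by omega
          have hnlo : A (k - 2) ≤ n := by omega
          have hnhi : n < A k := by omega
          obtain ⟨_, _, hc⟩ := hAinv n hn1
          have hlo : k - 2 ≤ Ainv n := hc (k - 2) (by omega) hnlo
          have hhi : Ainv n ≤ k - 1 := hinv_le n k (by omega) hn1 hnhi
          rw [hbv]
          omega
        · -- recursive range
          have hbv := hbrec k h4 t (by simp only [Finset.mem_Icc]; omega)
          set t' := t - A (k - 3) with ht'
          have hih := ih (k - 2) (by omega) (by omega) t'
            (by simp only [Finset.mem_Icc]; omega)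
          have hne : A (k - 2) - t' + 1 = A k - t + 1 := by omega
          rw [hne] at hih
          set n := A k - t + 1 with hn
          have hn1 : 1 ≤ n := by omega
          have hnhi : n < A k := by omega
          obtain ⟨ha, _, _⟩ := hAinv n hn1
          have hhi : Ainv n ≤ k - 1 := hinv_le n k (by omega) hn1 hnhi
          rw [hbv, hih]
          omega
end
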